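/- Let H₁, H₂, … be mutually orthogonal closed subspaces of a Hilbert space H, and let S(H₁,H₂,…) be the set of vectors x = Σₙ xₙ with xₙ ∈ Hₙ and Σₙ 4ⁿ‖xₙ‖² < ∞. Then S(H₁,H₂,…) is a linear subspace of H and is an operator range, i.e., equals the range of some bounded operator into H. -/

import Mathlib

open scoped InnerProductSpace ENNReal NNReal

/-!
`S(H₁,H₂,…)` is the range of the operator `g ↦ Σₙ 2⁻ⁿ gₙ` on the Hilbert sum `ℓ²(Hₙ)`: the
substitution `xₙ = 2⁻ⁿ gₙ` turns `Σₙ 4ⁿ‖xₙ‖² < ∞` into `g ∈ ℓ²`, and Hölder's inequality against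
`(2⁻ⁿ) ∈ ℓ²` makes the series converge absolutely, with a bound linear in `‖g‖`.
-/

namespace Submodule

variable {ι 𝕜 H : Type*} [RCLike 𝕜] [NormedAddCommGroup H] [NormedSpace 𝕜 H]

noncomputable def subtypeToSpanSingleton (V : Submodule 𝕜 H) : V →L[𝕜] 𝕜 →L[𝕜] H :=
  (ContinuousLinearMap.lsmul 𝕜 𝕜).flip ∘L V.subtypeL

theorem norm_subtypeToSpanSingleton_le (V : Submodule 𝕜 H) :
    ‖V.subtypeToSpanSingleton‖ ≤ (1 : ℝ≥0) := by
  refine (ContinuousLinearMap.opNorm_comp_le _ _).trans ?_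
  rw [ContinuousLinearMap.opNorm_flip]
  simpa using mul_le_one₀ ContinuousLinearMap.opNorm_lsmul_le (norm_nonneg _) V.norm_subtypeL_le

theorem memℓp_coe_iff {V : ι → Submodule 𝕜 H} {p : ℝ≥0∞} {g : ∀ i, V i} :
    Memℓp (fun i => (g i : H)) p ↔ Memℓp g p :=
  (memℓp_norm_iff (E := fun _ => H)).symm.trans (memℓp_norm_iff (E := fun i => V i) (f := g))

end Submodule

namespace lp

variable {ι 𝕜 H : Type*} [RCLike 𝕜] [NormedAddCommGroup H] [NormedSpace 𝕜 H] [CompleteSpace H]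
  {p q : ℝ≥0∞} [Fact (1 ≤ p)] [Fact (1 ≤ q)] [p.HolderConjugate q]

/-- `g ↦ ∑' i, c i • g i`. -/
noncomputable def weightedSum (V : ι → Submodule 𝕜 H) (c : lp (fun _ : ι => 𝕜) q) :
    lp (fun i => V i) p →L[𝕜] H :=
  (dualPairing p q (fun i => (V i).subtypeToSpanSingleton)
    (fun i => (V i).norm_subtypeToSpanSingleton_le)).flip c

variable {V : ι → Submodule 𝕜 H}

theorem hasSum_weightedSum (c : lp (fun _ : ι => 𝕜) q) (g : lp (fun i => V i) p) :
    HasSum (fun i => c i • (g i : H)) (weightedSum V c g) :=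
  ((lp.memℓp g).holder 1 (lp.memℓp c) (fun i => (V i).subtypeToSpanSingleton)
    (fun i => (V i).norm_subtypeToSpanSingleton_le)).summable_of_one.hasSum

theorem range_weightedSum {c : lp (fun _ : ι => 𝕜) q} (hc : ∀ i, c i ≠ 0) :
    (LinearMap.range (weightedSum V c (p := p) : lp (fun i => V i) p →ₗ[𝕜] H) : Set H) =
      {x | ∃ f : ι → H, (∀ i, f i ∈ V i) ∧ HasSum f x ∧ Memℓp (fun i => (c i)⁻¹ • f i) p} := by
  ext x
  constructor
  · rintro ⟨g, rfl⟩
    refine ⟨fun i => c i • (g i : H), fun i => (V i).smul_mem _ (g i).2,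
      hasSum_weightedSum c g, ?_⟩
    simp only [inv_smul_smul₀ (hc _)]
    exact Submodule.memℓp_coe_iff.2 (lp.memℓp g)
  · rintro ⟨f, hfV, hfx, hf⟩
    let g : lp (fun i => V i) p :=
      ⟨fun i => ⟨(c i)⁻¹ • f i, (V i).smul_mem _ (hfV i)⟩, Submodule.memℓp_coe_iff.1 hf⟩
    refine ⟨g, (hasSum_weightedSum c g).unique ?_⟩
    simpa [g, smul_inv_smul₀ (hc _)] using hfx

end lp

theorem memℓp_two_inv_two_pow {𝕜 : Type*} [RCLike 𝕜] : Memℓp (fun n : ℕ => (2⁻¹ : 𝕜) ^ n) 2 := by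
  apply memℓp_gen
  simp only [norm_pow, norm_inv, RCLike.norm_two, ENNReal.toReal_ofNat, Real.rpow_two]
  simp_rw [← pow_mul, mul_comm _ 2, pow_mul]
  exact summable_geometric_of_lt_one (by positivity) (by norm_num)

theorem memℓp_two_pow_smul_iff {𝕜 E : Type*} [RCLike 𝕜] [NormedAddCommGroup E] [NormedSpace 𝕜 E]
    {f : ℕ → E} :
    Memℓp (fun n => (2 : 𝕜) ^ n • f n) 2 ↔ Summable fun n => (4 : ℝ) ^ n * ‖f n‖ ^ 2 := by
  rw [memℓp_gen_iff (by norm_num)]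
  congr! 2 with n
  rw [norm_smul, norm_pow, RCLike.norm_two, ENNReal.toReal_ofNat, Real.rpow_two, mul_pow,
    ← pow_mul, mul_comm n, pow_mul]
  norm_num

theorem setSum_isSubmodule_and_operatorRange
    {H : Type u} [NormedAddCommGroup H] [InnerProductSpace ℂ H] [CompleteSpace H]
    (Hs : ℕ → Submodule ℂ H) (hclosed : ∀ n, IsClosed (Hs n : Set H)) :
    ∃ S : Submodule ℂ H,
      (S : Set H) = {x : H | ∃ f : ℕ → H, (∀ n, f n ∈ Hs n) ∧ HasSum f x ∧
        Summable (fun n => (4 : ℝ) ^ n * ‖f n‖ ^ 2)} ∧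
      ∃ (G : Type u) (_ : NormedAddCommGroup G) (_ : InnerProductSpace ℂ G)
        (_ : CompleteSpace G) (T : G →L[ℂ] H), LinearMap.range (T : G →ₗ[ℂ] H) = S := by
  have : ∀ n, CompleteSpace (Hs n) := fun n => (hclosed n).completeSpace_coe
  let c : lp (fun _ : ℕ => ℂ) 2 := ⟨fun n => 2⁻¹ ^ n, memℓp_two_inv_two_pow⟩
  let T : lp (fun n => Hs n) 2 →L[ℂ] H := lp.weightedSum Hs c
  refine ⟨LinearMap.range (T : lp (fun n => Hs n) 2 →ₗ[ℂ] H), ?_, lp (fun n => Hs n) 2,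
    inferInstance, inferInstance, inferInstance, T, rfl⟩
  rw [lp.range_weightedSum fun n => pow_ne_zero n (by norm_num)]
  simp only [c, inv_pow, inv_inv, memℓp_two_pow_smul_iff]
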